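/- For all ε > 0, Δ > 0 and γ ∈ [0,1], the expected ℓ¹ cost of the two-dimensional staircase distribution is ∫_{ℝ²} ‖x‖₁ f_γ(x) dx = (2Δ/3) · (γ³ + (3b/(1−b))·γ² + (3(b²+b)/(1−b)²)·γ + b(1+4b+b²)/(1−b)³) / (γ² + (2b/(1−b))·γ + (b+b²)/(1−b)²), where b = e^{−ε}. -/

import Mathlib

open MeasureTheory Real Filter
open scoped ENNReal Topology

noncomputable section

/-- The ℓ¹ norm on ℝ². -/
def l1 (x : ℝ × ℝ) : ℝ := |x.1| + |x.2|

/-- Normalization constant of the 2-dimensional staircase density. -/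
def anorm (ε Δ γ : ℝ) : ℝ :=
  1 / (2 * Δ ^ 2 * (γ ^ 2 + 2 * Real.exp (-ε) / (1 - Real.exp (-ε)) * γ +
    (Real.exp (-ε) + Real.exp (-ε) ^ 2) / (1 - Real.exp (-ε)) ^ 2))

/-- The 2-dimensional staircase density with parameter γ; for ‖x‖₁ ∈ [kΔ, (k+γ)Δ) it
equals a(γ)·e^{-kε}, and for ‖x‖₁ ∈ [(k+γ)Δ, (k+1)Δ) it equals a(γ)·e^{-(k+1)ε}. -/
def stair (ε Δ γ : ℝ) (x : ℝ × ℝ) : ℝ :=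
  if l1 x < ((⌊l1 x / Δ⌋ : ℝ) + γ) * Δ then
    anorm ε Δ γ * Real.exp (-(⌊l1 x / Δ⌋ : ℝ) * ε)
  else
    anorm ε Δ γ * Real.exp (-((⌊l1 x / Δ⌋ : ℝ) + 1) * ε)

/-
The density is a function of ‖x‖₁, and the ℓ¹ unit ball of ℝ² has area 2, so polar coordinates
for the ℓ¹ norm turn the cost into 4 ∫₀^∞ r² g(r) dr, where g is the radial profile of the density.
On the shell [kΔ, (k+1)Δ) the profile equals a·bᵏ on [kΔ, (k+γ)Δ) and a·bᵏ⁺¹ on the rest, so the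
shell contributes a·Δ³/3 · bᵏ · P(k) for a quadratic polynomial P; summing against the geometric
weights with ∑ k² bᵏ = b(1+b)/(1-b)³ gives the closed form.
-/

open Set Function

theorem volume_setOf_abs_add_abs_lt_one :
    volume {x : ℝ × ℝ | |x.1| + |x.2| < 1} = 2 := by
  have hset : {x : ℝ × ℝ | |x.1| + |x.2| < 1} = MeasurableEquiv.finTwoArrow.symm ⁻¹'
      {x : Fin 2 → ℝ | ∑ i, |x i| ^ (1 : ℝ) < 1} := by
    ext x
    simp [Fin.sum_univ_two]
  rw [hset, (volume_preserving_finTwoArrow ℝ).symm.measure_preimage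
    (measurableSet_lt (by fun_prop) measurable_const).nullMeasurableSet,
    volume_sum_rpow_lt_one _ le_rfl]
  norm_num [Real.Gamma_two]

theorem integral_fun_l1 {F : Type*} [NormedAddCommGroup F] [NormedSpace ℝ F] (f : ℝ → F) :
    ∫ x : ℝ × ℝ, f (l1 x) = (4 : ℝ) • ∫ y in Ioi (0 : ℝ), y • f y := by
  let e := MeasurableEquiv.toLp 1 (ℝ × ℝ)
  let μ : Measure (WithLp 1 (ℝ × ℝ)) := volume.map e
  have : μ.IsAddHaarMeasure :=
    (WithLp.prodContinuousLinearEquiv 1 ℝ ℝ ℝ).symm.isAddHaarMeasure_map volume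
  have hnorm (x : ℝ × ℝ) : ‖e x‖ = l1 x := by
    simp [e, WithLp.prod_norm_eq_of_L1, l1]
  have hdim : Module.finrank ℝ (WithLp 1 (ℝ × ℝ)) = 2 := by
    simp [(WithLp.linearEquiv 1 ℝ (ℝ × ℝ)).finrank_eq]
  have hball : μ.real (Metric.ball 0 1) = 2 := by
    have : e ⁻¹' Metric.ball 0 1 = {x : ℝ × ℝ | |x.1| + |x.2| < 1} := by
      ext x
      simp only [mem_preimage, mem_ball_zero_iff, hnorm, l1, mem_ofPred_eq]
    simp [μ, measureReal_def, e.map_apply, this, volume_setOf_abs_add_abs_lt_one]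
  have key := integral_fun_norm_addHaar μ f
  rw [hdim, hball, integral_map_equiv] at key
  simp only [hnorm] at key
  rw [key, ← Nat.cast_smul_eq_nsmul ℝ, smul_smul]
  norm_num

theorem hasSum_sq_mul_geometric_of_norm_lt_one {r : ℝ} (hr : ‖r‖ < 1) :
    HasSum (fun n : ℕ ↦ (n : ℝ) ^ 2 * r ^ n) (r * (1 + r) / (1 - r) ^ 3) := by
  have h1r : 1 - r ≠ 0 := sub_ne_zero.mpr fun h ↦ by simp [← h] at hr
  -- n ^ 2 = 2 * (n + 2).choose 2 - 3 * n - 2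
  have hsum : r * (1 + r) / (1 - r) ^ 3 =
      2 * (1 / (1 - r) ^ (2 + 1)) - 3 * (r / (1 - r) ^ 2) - 2 * (1 - r)⁻¹ := by
    field_simp
    ring
  rw [hsum]
  refine ((((hasSum_choose_mul_geometric_of_norm_lt_one 2 hr).mul_left 2).sub
    ((hasSum_coe_mul_geometric_of_norm_lt_one hr).mul_left 3)).sub
    ((hasSum_geometric_of_norm_lt_one hr).mul_left 2)).congr_fun fun n ↦ ?_
  rw [Nat.cast_choose_two]
  push_cast
  ring

theorem hasSum_quadratic_mul_geometric_of_norm_lt_one {r : ℝ} (hr : ‖r‖ < 1) (p q s : ℝ) :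
    HasSum (fun n : ℕ ↦ (p * n ^ 2 + q * n + s) * r ^ n)
      (p * (r * (1 + r) / (1 - r) ^ 3) + q * (r / (1 - r) ^ 2) + s * (1 - r)⁻¹) :=
  ((((hasSum_sq_mul_geometric_of_norm_lt_one hr).mul_left p).add
    ((hasSum_coe_mul_geometric_of_norm_lt_one hr).mul_left q)).add
    ((hasSum_geometric_of_norm_lt_one hr).mul_left s)).congr_fun fun n ↦ by ring

theorem hasSum_setIntegral_Ico_mul_of_nonneg {f : ℝ → ℝ} {Δ : ℝ} (hΔ : 0 < Δ)
    (hf₀ : ∀ y, 0 ≤ y → 0 ≤ f y) (hf : ∀ k : ℕ, IntegrableOn f (Ico (k * Δ) ((k + 1) * Δ)))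
    (hs : Summable fun k : ℕ ↦ ∫ y in Ico (k * Δ) ((k + 1) * Δ), f y) :
    HasSum (fun k : ℕ ↦ ∫ y in Ico (k * Δ) ((k + 1) * Δ), f y) (∫ y in Ioi 0, f y) := by
  have hcover : ⋃ k : ℕ, Ico (k * Δ) ((k + 1) * Δ) = Ici 0 := by
    ext y
    simp only [mem_iUnion, mem_Ico, mem_Ici]
    constructor
    · rintro ⟨k, hk, -⟩
      exact le_trans (by positivity) hk
    · intro hy
      exact ⟨⌊y / Δ⌋₊, (le_div_iff₀ hΔ).mp (Nat.floor_le (div_nonneg hy hΔ.le)),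
        (div_lt_iff₀ hΔ).mp (Nat.lt_floor_add_one _)⟩
  have hdisj : Pairwise (Disjoint on fun k : ℕ ↦ Ico (k * Δ) ((k + 1) * Δ)) := by
    simpa using (Nat.mono_cast.mul_const hΔ.le).pairwise_disjoint_on_Ico_succ
  have hnorm (k : ℕ) :
      ∫ y in Ico (k * Δ) ((k + 1) * Δ), ‖f y‖ = ∫ y in Ico (k * Δ) ((k + 1) * Δ), f y :=
    setIntegral_congr_fun measurableSet_Ico fun y hy ↦
      Real.norm_of_nonneg (hf₀ y (le_trans (by positivity) hy.1))
  rw [← integral_Ici_eq_integral_Ioi, ← hcover]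
  exact hasSum_integral_iUnion (fun _ ↦ measurableSet_Ico) hdisj
    (integrableOn_iUnion_of_summable_integral_norm hf (by simpa only [hnorm] using hs))

theorem integrableOn_Ico_and_integral_eq_of_eqOn_mul_sq {f : ℝ → ℝ} {c α β : ℝ} (hαβ : α ≤ β)
    (hf : EqOn f (fun y ↦ c * y ^ 2) (Ico α β)) :
    IntegrableOn f (Ico α β) ∧ ∫ y in Ico α β, f y = c * (β ^ 3 - α ^ 3) / 3 := by
  refine ⟨(((by fun_prop : Continuous fun y : ℝ ↦ c * y ^ 2).integrableOn_Icc).mono_set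
    Ico_subset_Icc_self).congr_fun hf.symm measurableSet_Ico, ?_⟩
  rw [setIntegral_congr_fun measurableSet_Ico hf, integral_Ico_eq_integral_Ioo,
    ← integral_Ioc_eq_integral_Ioo, ← intervalIntegral.integral_of_le hαβ,
    intervalIntegral.integral_const_mul, integral_pow]
  ring

def stairProfile (ε Δ γ r : ℝ) : ℝ :=
  if r < ((⌊r / Δ⌋ : ℝ) + γ) * Δ then
    anorm ε Δ γ * Real.exp (-(⌊r / Δ⌋ : ℝ) * ε)
  else
    anorm ε Δ γ * Real.exp (-((⌊r / Δ⌋ : ℝ) + 1) * ε)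

theorem stair_eq_stairProfile (ε Δ γ : ℝ) (x : ℝ × ℝ) :
    stair ε Δ γ x = stairProfile ε Δ γ (l1 x) := rfl

section Staircase

variable {ε Δ γ : ℝ}

theorem anorm_pos (hε : 0 < ε) (hΔ : 0 < Δ) (hγ : 0 ≤ γ) : 0 < anorm ε Δ γ := by
  have hb : 0 < 1 - Real.exp (-ε) := sub_pos.mpr (Real.exp_lt_one_iff.mpr (neg_lt_zero.mpr hε))
  unfold anorm
  positivity

theorem floor_div_eq_of_mem_Ico (hΔ : 0 < Δ) {k : ℕ} {y : ℝ}
    (hy : y ∈ Ico (k * Δ) ((k + 1) * Δ)) : ⌊y / Δ⌋ = k := by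
  rw [Int.floor_eq_iff, le_div_iff₀ hΔ, div_lt_iff₀ hΔ]
  exact_mod_cast hy

theorem stairProfile_of_mem_Ico_left (hΔ : 0 < Δ) (hγ : γ ≤ 1) {k : ℕ} {y : ℝ}
    (hy : y ∈ Ico (k * Δ) ((k + γ) * Δ)) :
    stairProfile ε Δ γ y = anorm ε Δ γ * Real.exp (-ε) ^ k := by
  have hk : ⌊y / Δ⌋ = k := floor_div_eq_of_mem_Ico hΔ ⟨hy.1, hy.2.trans_le (by gcongr)⟩
  rw [stairProfile, hk, if_pos (mod_cast hy.2), ← Real.exp_nat_mul]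
  push_cast
  ring_nf

theorem stairProfile_of_mem_Ico_right (hΔ : 0 < Δ) (hγ : 0 ≤ γ) {k : ℕ} {y : ℝ}
    (hy : y ∈ Ico ((k + γ) * Δ) ((k + 1) * Δ)) :
    stairProfile ε Δ γ y = anorm ε Δ γ * Real.exp (-ε) ^ (k + 1) := by
  have hkγ : (k : ℝ) * Δ ≤ (k + γ) * Δ := by gcongr; simpa using hγ
  have hk : ⌊y / Δ⌋ = k := floor_div_eq_of_mem_Ico hΔ ⟨hkγ.trans hy.1, hy.2⟩
  rw [stairProfile, hk, if_neg (mod_cast hy.1.not_gt), ← Real.exp_nat_mul]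
  push_cast
  ring_nf

theorem integrableOn_and_integral_Ico_sq_mul_stairProfile (hΔ : 0 < Δ) (hγ : γ ∈ Icc (0 : ℝ) 1)
    (k : ℕ) :
    IntegrableOn (fun y ↦ y * (y * stairProfile ε Δ γ y)) (Ico (k * Δ) ((k + 1) * Δ)) ∧
      ∫ y in Ico (k * Δ) ((k + 1) * Δ), y * (y * stairProfile ε Δ γ y) =
        anorm ε Δ γ * (Real.exp (-ε) ^ k * ((k + γ) ^ 3 - k ^ 3) +
          Real.exp (-ε) ^ (k + 1) * ((k + 1) ^ 3 - (k + γ) ^ 3)) * Δ ^ 3 / 3 := by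
  have h₁ : (k : ℝ) * Δ ≤ (k + γ) * Δ := by gcongr; simpa using hγ.1
  have h₂ : ((k : ℝ) + γ) * Δ ≤ (k + 1) * Δ := by gcongr; exact hγ.2
  obtain ⟨hi₁, he₁⟩ := integrableOn_Ico_and_integral_eq_of_eqOn_mul_sq
    (f := fun y ↦ y * (y * stairProfile ε Δ γ y)) (c := anorm ε Δ γ * Real.exp (-ε) ^ k) h₁
    fun y hy ↦ by
      simp only [stairProfile_of_mem_Ico_left hΔ hγ.2 hy]
      ring
  obtain ⟨hi₂, he₂⟩ := integrableOn_Ico_and_integral_eq_of_eqOn_mul_sq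
    (f := fun y ↦ y * (y * stairProfile ε Δ γ y)) (c := anorm ε Δ γ * Real.exp (-ε) ^ (k + 1)) h₂
    fun y hy ↦ by
      simp only [stairProfile_of_mem_Ico_right hΔ hγ.1 hy]
      ring
  rw [← Ico_union_Ico_eq_Ico h₁ h₂]
  refine ⟨hi₁.union hi₂, ?_⟩
  rw [setIntegral_union Ico_disjoint_Ico_same measurableSet_Ico hi₁ hi₂, he₁, he₂]
  ring

theorem integral_Ioi_sq_mul_stairProfile (hε : 0 < ε) (hΔ : 0 < Δ) (hγ : γ ∈ Icc (0 : ℝ) 1) :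
    ∫ y in Ioi 0, y * (y * stairProfile ε Δ γ y) =
      anorm ε Δ γ * Δ ^ 3 / 3 *
        (3 * (γ + Real.exp (-ε) * (1 - γ)) *
            (Real.exp (-ε) * (1 + Real.exp (-ε)) / (1 - Real.exp (-ε)) ^ 3) +
          3 * (γ ^ 2 + Real.exp (-ε) * (1 - γ ^ 2)) *
            (Real.exp (-ε) / (1 - Real.exp (-ε)) ^ 2) +
          (γ ^ 3 + Real.exp (-ε) * (1 - γ ^ 3)) * (1 - Real.exp (-ε))⁻¹) := by
  set b := Real.exp (-ε)
  have hb : ‖b‖ < 1 := by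
    rw [Real.norm_of_nonneg (Real.exp_nonneg _), Real.exp_lt_one_iff]
    linarith
  have hseries := (hasSum_quadratic_mul_geometric_of_norm_lt_one hb (3 * (γ + b * (1 - γ)))
    (3 * (γ ^ 2 + b * (1 - γ ^ 2))) (γ ^ 3 + b * (1 - γ ^ 3))).mul_left (anorm ε Δ γ * Δ ^ 3 / 3)
  have hshells :
      (fun k : ℕ ↦ ∫ y in Ico (k * Δ) ((k + 1) * Δ), y * (y * stairProfile ε Δ γ y)) =
      fun k : ℕ ↦ anorm ε Δ γ * Δ ^ 3 / 3 * ((3 * (γ + b * (1 - γ)) * k ^ 2 +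
        3 * (γ ^ 2 + b * (1 - γ ^ 2)) * k + (γ ^ 3 + b * (1 - γ ^ 3))) * b ^ k) := by
    funext k
    rw [(integrableOn_and_integral_Ico_sq_mul_stairProfile hΔ hγ k).2]
    ring
  have hnonneg (y : ℝ) (_ : 0 ≤ y) : 0 ≤ y * (y * stairProfile ε Δ γ y) := by
    have := anorm_pos hε hΔ hγ.1
    unfold stairProfile
    split_ifs <;> positivity
  have hradial := hasSum_setIntegral_Ico_mul_of_nonneg hΔ hnonneg
    (fun k ↦ (integrableOn_and_integral_Ico_sq_mul_stairProfile hΔ hγ k).1)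
    (hshells ▸ hseries.summable)
  rw [hshells] at hradial
  exact hradial.unique hseries

end Staircase

/-- The expected ℓ¹ cost of the two-dimensional staircase distribution in closed form. -/
theorem staircase_cost_formula (ε Δ γ : ℝ) (hε : 0 < ε) (hΔ : 0 < Δ)
    (hγ : γ ∈ Set.Icc (0 : ℝ) 1) :
    ∫ x : ℝ × ℝ, l1 x * stair ε Δ γ x =
      (2 * Δ / 3) *
        (γ ^ 3 + 3 * Real.exp (-ε) / (1 - Real.exp (-ε)) * γ ^ 2 +
          3 * (Real.exp (-ε) ^ 2 + Real.exp (-ε)) / (1 - Real.exp (-ε)) ^ 2 * γ +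
          Real.exp (-ε) * (1 + 4 * Real.exp (-ε) + Real.exp (-ε) ^ 2) /
            (1 - Real.exp (-ε)) ^ 3) /
        (γ ^ 2 + 2 * Real.exp (-ε) / (1 - Real.exp (-ε)) * γ +
          (Real.exp (-ε) + Real.exp (-ε) ^ 2) / (1 - Real.exp (-ε)) ^ 2) := by
  simp only [stair_eq_stairProfile]
  rw [integral_fun_l1 fun r ↦ r * stairProfile ε Δ γ r]
  simp only [smul_eq_mul]
  rw [integral_Ioi_sq_mul_stairProfile hε hΔ hγ]
  have hb : 0 < 1 - Real.exp (-ε) := sub_pos.mpr (Real.exp_lt_one_iff.mpr (neg_lt_zero.mpr hε))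
  unfold anorm
  field_simp
  ring
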